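/- Let Φ = (G, φ) be a T-gain graph on a connected graph with the standard vertex order <. Then D^max_<(Φ) = D^min_<(Φ) if and only if for every pair of vertices s, t, all shortest paths from s to t have the same gain; and in that case D^max_{<_a}(Φ) = D^min_{<_a}(Φ) for every vertex ordering <_a. -/

import Mathlib

open Matrix
open scoped Classical

noncomputable section

namespace GG

variable {V : Type*}

/-- The gain of a walk: product of the gains of its oriented edges. -/
def walkGain {G : SimpleGraph V} (φ : V → V → ℂ) {u v : V} (p : G.Walk u v) : ℂ :=
  (p.darts.map (fun d => φ d.toProd.1 d.toProd.2)).prod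

/-- `φ` is a `𝕋`-gain function on `G`: unit modulus on edges, inverse under reversal. -/
def IsGain (G : SimpleGraph V) (φ : V → V → ℂ) : Prop :=
  (∀ i j, G.Adj i j → ‖φ i j‖ = 1) ∧ (∀ i j, G.Adj i j → φ j i = (φ i j)⁻¹)

/-- Adjacency matrix of a gain graph. -/
def gainAdj [Fintype V] [DecidableEq V] (G : SimpleGraph V) (φ : V → V → ℂ) :
    Matrix V V ℂ := fun i j => if G.Adj i j then φ i j else 0

/-- A gain graph is balanced if every cycle has gain 1. -/
def GBalanced (G : SimpleGraph V) (φ : V → V → ℂ) : Prop :=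
  ∀ (u : V) (c : G.Walk u u), c.IsCycle → walkGain φ c = 1

/-- All shortest paths between any pair of vertices have the same gain. -/
def DistCompatible (G : SimpleGraph V) (φ : V → V → ℂ) : Prop :=
  ∀ (s t : V) (p q : G.Walk s t), p.length = G.dist s t → q.length = G.dist s t →
    walkGain φ p = walkGain φ q

/-- The set of gains of shortest `s`-`t` paths. -/
def shortestGains (G : SimpleGraph V) (φ : V → V → ℂ) (s t : V) : Set ℂ :=
  {z | ∃ p : G.Walk s t, p.length = G.dist s t ∧ walkGain φ p = z}

/-- The element of `S` maximizing the real part, ties broken by maximal imaginary part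
(correct for finite nonempty sets of gains). -/
def lexMaxGain (S : Set ℂ) : ℂ :=
  ⟨sSup (Complex.re '' S), sSup (Complex.im '' {z ∈ S | z.re = sSup (Complex.re '' S)})⟩

/-- The element of `S` minimizing the real part, ties broken by minimal imaginary part. -/
def lexMinGain (S : Set ℂ) : ℂ :=
  ⟨sInf (Complex.re '' S), sInf (Complex.im '' {z ∈ S | z.re = sInf (Complex.re '' S)})⟩

/-- The maximum gain distance matrix `D^max_<(Φ)` with respect to a strict order `lt`. -/
def Dmax [Fintype V] [DecidableEq V] (G : SimpleGraph V) (φ : V → V → ℂ)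
    (lt : V → V → Prop) : Matrix V V ℂ := fun s t =>
  if lt s t then lexMaxGain (shortestGains G φ s t) * (G.dist s t : ℂ)
  else if lt t s then (starRingEnd ℂ) (lexMaxGain (shortestGains G φ t s)) * (G.dist s t : ℂ)
  else 0

/-- The minimum gain distance matrix `D^min_<(Φ)` with respect to a strict order `lt`. -/
def Dmin [Fintype V] [DecidableEq V] (G : SimpleGraph V) (φ : V → V → ℂ)
    (lt : V → V → Prop) : Matrix V V ℂ := fun s t =>
  if lt s t then lexMinGain (shortestGains G φ s t) * (G.dist s t : ℂ)
  else if lt t s then (starRingEnd ℂ) (lexMinGain (shortestGains G φ t s)) * (G.dist s t : ℂ)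
  else 0

/-- Vertex order independence: the gain distance matrices agree for the standard order
and its reverse. -/
def OrderIndependent [Fintype V] [DecidableEq V] [LinearOrder V] (G : SimpleGraph V)
    (φ : V → V → ℂ) : Prop :=
  Dmax G φ (· < ·) = Dmax G φ (fun a b => b < a) ∧
  Dmin G φ (· < ·) = Dmin G φ (fun a b => b < a)

/-- The largest (real) eigenvalue of a matrix. -/
def maxEig [Fintype V] [DecidableEq V] (A : Matrix V V ℂ) : ℝ :=
  sSup {r : ℝ | (r : ℂ) ∈ spectrum ℂ A}

/-- The spectral radius of a matrix. -/
def specRad [Fintype V] [DecidableEq V] (A : Matrix V V ℂ) : ℝ :=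
  sSup {r : ℝ | ∃ z ∈ spectrum ℂ A, ‖z‖ = r}

/-- The distance matrix of the underlying graph, as a complex matrix. -/
def distMatrix [Fintype V] [DecidableEq V] (G : SimpleGraph V) : Matrix V V ℂ :=
  fun i j => (G.dist i j : ℂ)

/-- Weighted gain adjacency matrix `A(Φ_w)`. -/
def wGainAdj [Fintype V] [DecidableEq V] (G : SimpleGraph V) (φ : V → V → ℂ)
    (w : V → V → ℝ) : Matrix V V ℂ := fun i j => if G.Adj i j then φ i j * (w i j : ℂ) else 0

/-- Weighted adjacency matrix `A(G_w)` of the underlying weighted graph. -/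
def wAdj [Fintype V] [DecidableEq V] (G : SimpleGraph V) (w : V → V → ℝ) :
    Matrix V V ℂ := fun i j => if G.Adj i j then (w i j : ℂ) else 0


/-!
Off the diagonal, an entry of `D^max` or `D^min` is the lexicographic extremum of the gains of
shortest paths (or its conjugate) times the nonzero distance. For a finite set of complex numbers
the lexicographic maximum and minimum agree exactly when the set has at most one element, so
either side of the equivalence says that every set of shortest-path gains is a subsingleton, and
this does not refer to the order. Below the diagonal one uses that reversing a walk inverts its
gain.
-/

open SimpleGraph

theorem eq_csSup_of_csSup_eq_csInf {α : Type*} [ConditionallyCompleteLattice α] {T : Set α}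
    (hT : BddAbove T) (hT' : BddBelow T) (h : sSup T = sInf T) {x : α} (hx : x ∈ T) :
    x = sSup T :=
  le_antisymm (le_csSup hT hx) (h ▸ csInf_le hT' hx)

theorem lexMaxGain_singleton (g : ℂ) : lexMaxGain {g} = g := by
  rw [lexMaxGain, Set.image_singleton, csSup_singleton,
    Set.sep_eq_self_iff_mem_true.mpr (by simp), Set.image_singleton, csSup_singleton]

theorem lexMinGain_singleton (g : ℂ) : lexMinGain {g} = g := by
  rw [lexMinGain, Set.image_singleton, csInf_singleton,
    Set.sep_eq_self_iff_mem_true.mpr (by simp), Set.image_singleton, csInf_singleton]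

theorem lexMaxGain_eq_lexMinGain_iff {S : Set ℂ} (hS : S.Finite) :
    lexMaxGain S = lexMinGain S ↔ S.Subsingleton := by
  refine ⟨fun h => ?_, fun h => ?_⟩
  · have hre : sSup (Complex.re '' S) = sInf (Complex.re '' S) := congrArg Complex.re h
    have hre_eq : ∀ z ∈ S, z.re = sSup (Complex.re '' S) := fun z hz =>
      eq_csSup_of_csSup_eq_csInf (hS.image _).bddAbove (hS.image _).bddBelow hre ⟨z, hz, rfl⟩
    have htie : {z ∈ S | z.re = sSup (Complex.re '' S)} = S :=
      Set.sep_eq_self_iff_mem_true.mpr hre_eq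
    have him : sSup (Complex.im '' S) = sInf (Complex.im '' S) := by
      have : (lexMaxGain S).im = (lexMinGain S).im := congrArg Complex.im h
      rwa [lexMaxGain, lexMinGain, ← hre, htie] at this
    have him_eq : ∀ z ∈ S, z.im = sSup (Complex.im '' S) := fun z hz =>
      eq_csSup_of_csSup_eq_csInf (hS.image _).bddAbove (hS.image _).bddBelow him ⟨z, hz, rfl⟩
    intro z hz w hw
    exact Complex.ext ((hre_eq z hz).trans (hre_eq w hw).symm)
      ((him_eq z hz).trans (him_eq w hw).symm)
  · rcases h.eq_empty_or_singleton with rfl | ⟨g, rfl⟩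
    · simp [lexMaxGain, lexMinGain]
    · rw [lexMaxGain_singleton, lexMinGain_singleton]

variable {G : SimpleGraph V} {φ : V → V → ℂ}

theorem walkGain_cons {u v w : V} (h : G.Adj u v) (p : G.Walk v w) :
    walkGain φ (Walk.cons h p) = φ u v * walkGain φ p := by
  simp [walkGain]

theorem walkGain_append {u v w : V} (p : G.Walk u v) (q : G.Walk v w) :
    walkGain φ (p.append q) = walkGain φ p * walkGain φ q := by
  simp [walkGain, Walk.darts_append]

theorem walkGain_reverse (hinv : ∀ i j, G.Adj i j → φ j i = (φ i j)⁻¹) {u v : V}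
    (p : G.Walk u v) : walkGain φ p.reverse = (walkGain φ p)⁻¹ := by
  induction p with
  | nil => simp [walkGain]
  | cons h p ih =>
    rw [Walk.reverse_cons, walkGain_append, ih, walkGain_cons, walkGain_cons, hinv _ _ h,
      mul_inv]
    simp [walkGain, mul_comm]

theorem shortestGains_finite [Fintype V] (s t : V) : (shortestGains G φ s t).Finite := by
  have hwalks : {p : G.Walk s t | p.length = G.dist s t}.Finite := Set.toFinite _
  convert hwalks.image (walkGain φ) using 1
  ext z
  simp [shortestGains]

theorem shortestGains_swap (hinv : ∀ i j, G.Adj i j → φ j i = (φ i j)⁻¹) (s t : V) :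
    shortestGains G φ t s = (·⁻¹) '' shortestGains G φ s t := by
  ext z
  constructor
  · rintro ⟨p, hp, rfl⟩
    have hrev : p.reverse.length = G.dist s t := by rw [Walk.length_reverse, hp, G.dist_comm]
    exact ⟨_, ⟨p.reverse, hrev, rfl⟩, by simp only [walkGain_reverse hinv, inv_inv]⟩
  · rintro ⟨_, ⟨p, hp, rfl⟩, rfl⟩
    have hrev : p.reverse.length = G.dist t s := by rw [Walk.length_reverse, hp, G.dist_comm]
    exact ⟨p.reverse, hrev, walkGain_reverse hinv p⟩

theorem subsingleton_shortestGains_self (s : V) : (shortestGains G φ s s).Subsingleton := by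
  rintro _ ⟨p, hp, rfl⟩ _ ⟨q, hq, rfl⟩
  rw [dist_self, Walk.length_eq_zero_iff, ← Walk.eq_nil_iff_nil] at hp hq
  rw [hp, hq]

theorem distCompatible_iff_forall_subsingleton :
    DistCompatible G φ ↔ ∀ s t, (shortestGains G φ s t).Subsingleton := by
  refine ⟨fun h s t => ?_, fun h s t p q hp hq => h s t ⟨p, hp, rfl⟩ ⟨q, hq, rfl⟩⟩
  rintro _ ⟨p, hp, rfl⟩ _ ⟨q, hq, rfl⟩
  exact h s t p q hp hq

section GainDistanceMatrix

variable [Fintype V] [DecidableEq V]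

theorem Dmax_eq_Dmin_of_subsingleton (h : ∀ s t, (shortestGains G φ s t).Subsingleton)
    (r : V → V → Prop) : Dmax G φ r = Dmin G φ r := by
  have hlex s t := (lexMaxGain_eq_lexMinGain_iff (shortestGains_finite s t)).mpr (h s t)
  funext s t
  simp only [Dmax, Dmin, hlex]

theorem subsingleton_shortestGains_of_Dmax_eq_Dmin {r : V → V → Prop}
    (h : Dmax G φ r = Dmin G φ r) {s t : V} (hst : r s t) (hd : G.dist s t ≠ 0) :
    (shortestGains G φ s t).Subsingleton := by
  have hentry := congrFun (congrFun h s) t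
  simp only [Dmax, Dmin, if_pos hst] at hentry
  exact (lexMaxGain_eq_lexMinGain_iff (shortestGains_finite s t)).mp
    (mul_right_cancel₀ (Nat.cast_ne_zero.mpr hd) hentry)

end GainDistanceMatrix

theorem Dmax_eq_Dmin_iff_general {V : Type*} [Fintype V] [LinearOrder V]
    (G : SimpleGraph V) (hconn : G.Connected) (φ : V → V → ℂ) (hφ : IsGain G φ) :
    (Dmax G φ (· < ·) = Dmin G φ (· < ·) ↔
      ∀ (s t : V) (p q : G.Walk s t), p.length = G.dist s t → q.length = G.dist s t →
        walkGain φ p = walkGain φ q) ∧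
    (Dmax G φ (· < ·) = Dmin G φ (· < ·) →
      ∀ r : V → V → Prop, IsStrictTotalOrder V r → Dmax G φ r = Dmin G φ r) := by
  have hdist {s t : V} (hst : s < t) : G.dist s t ≠ 0 := (hconn.pos_dist_of_ne hst.ne).ne'
  have hsub : Dmax G φ (· < ·) = Dmin G φ (· < ·) ↔
      ∀ s t, (shortestGains G φ s t).Subsingleton := by
    refine ⟨fun h s t => ?_, fun h => Dmax_eq_Dmin_of_subsingleton h _⟩
    rcases lt_trichotomy s t with hst | rfl | hts
    · exact subsingleton_shortestGains_of_Dmax_eq_Dmin h hst (hdist hst)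
    · exact subsingleton_shortestGains_self s
    · rw [shortestGains_swap hφ.2 t s]
      exact (subsingleton_shortestGains_of_Dmax_eq_Dmin h hts (hdist hts)).image _
  refine ⟨hsub.trans distCompatible_iff_forall_subsingleton.symm, fun h r _ => ?_⟩
  exact Dmax_eq_Dmin_of_subsingleton (hsub.mp h) r

/-- `D^max_< = D^min_<` for the standard order iff all shortest paths between
any pair of vertices have the same gain; in that case the equality holds for every order. -/
theorem Dmax_eq_Dmin_iff {V : Type*} [Fintype V] [DecidableEq V] [LinearOrder V]
    (G : SimpleGraph V) (hconn : G.Connected) (φ : V → V → ℂ) (hφ : IsGain G φ) :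
    (Dmax G φ (· < ·) = Dmin G φ (· < ·) ↔
      ∀ (s t : V) (p q : G.Walk s t), p.length = G.dist s t → q.length = G.dist s t →
        walkGain φ p = walkGain φ q) ∧
    (Dmax G φ (· < ·) = Dmin G φ (· < ·) →
      ∀ r : V → V → Prop, IsStrictTotalOrder V r → Dmax G φ r = Dmin G φ r) :=
  Dmax_eq_Dmin_iff_general G hconn φ hφ

end GG
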